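/- Let 0 < η ≤ 1 be such that t₁ and t₃ have no zeros in the disk {|z| < η}. If A ∈ ℂ^{n₁+1} and B ∈ ℂ^{n₃+1} are such that the polynomials P_A and Q_B have no common root in {|z| < η}, then for every z with |z| < η the real Fréchet derivative of F(·,A,B) at z is injective; i.e. F(·,A,B) is an immersion on {|z| < η}. -/

import Mathlib

/-!
The gᵢ are holomorphic, so the real derivative of `F = (g₁ + conj g₂, g₃ + conj g₄)` at `z` is
`v ↦ (v a + conj (v b), v c + conj (v d))` with `a, b, c, d` the complex derivatives of the `gᵢ`.
A nonzero kernel vector `v` forces `|a| = |b|`, `|c| = |d|` and, multiplying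
`v a = -conj (v b)` by `conj (v d) = -v c`, the phase relation `a conj d = conj b c`.
Here `a = P t₁`, `b = zᵏ Q t₂`, `c = Q t₃`, `d = zᵏ P t₄` with `P = P_A(z)`, `Q = Q_B(z)` and
`k = n₂ - n₃ = n₄ - n₁ > 0`. At `z = 0` the moduli give `P = Q = 0`. For `z ≠ 0` the phase
relation reads `|P|² t₁ conj t₄ = |Q|² conj t₂ t₃`, and multiplying by `t₂ t₄` and using `t₁ t₂ + t₃ t₄ = 0`
yields `(|P t₄|² + |Q t₂|²) t₁ t₂ = 0`, so `Q t₂ = 0`. Then `|P t₁| = |zᵏ Q t₂|` gives `P = 0`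
and `|Q t₃| = |zᵏ P t₄|` gives `Q = 0`.
-/

open Complex ComplexConjugate Metric

/-- The monic-plus-perturbation polynomial `P_A(z) = z^n + Σ_{i=0}^n aᵢ zⁱ`. -/
noncomputable def Ppoly (n : ℕ) (A : Fin (n + 1) → ℂ) (z : ℂ) : ℂ :=
  z ^ n + ∑ i : Fin (n + 1), A i * z ^ (i : ℕ)

noncomputable def addConjCLM (a b : ℂ) : ℂ →L[ℝ] ℂ :=
  (ContinuousLinearMap.smulRight (1 : ℂ →L[ℂ] ℂ) a).restrictScalars ℝ +
    conjCLE.toContinuousLinearMap.comp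
      ((ContinuousLinearMap.smulRight (1 : ℂ →L[ℂ] ℂ) b).restrictScalars ℝ)

@[simp]
theorem addConjCLM_apply (a b v : ℂ) : addConjCLM a b v = v * a + conj (v * b) := by
  simp [addConjCLM]

theorem HasDerivAt.hasFDerivAt_add_conj {g h : ℂ → ℂ} {a b z : ℂ}
    (hg : HasDerivAt g a z) (hh : HasDerivAt h b z) :
    HasFDerivAt (fun w => g w + conj (h w)) (addConjCLM a b) z :=
  (hg.hasFDerivAt.restrictScalars ℝ).add
    (conjCLE.toContinuousLinearMap.hasFDerivAt.comp z (hh.hasFDerivAt.restrictScalars ℝ))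

theorem norm_eq_of_mul_add_conj_mul_eq_zero {a b v : ℂ} (hv : v ≠ 0)
    (h : v * a + conj (v * b) = 0) : ‖a‖ = ‖b‖ := by
  have : ‖v * a‖ = ‖v * b‖ := by
    rw [eq_neg_of_add_eq_zero_left h, norm_neg, Complex.norm_conj]
  rwa [norm_mul, norm_mul, mul_right_inj' (norm_ne_zero_iff.mpr hv)] at this

theorem mul_conj_eq_of_mul_add_conj_mul_eq_zero {a b c d v : ℂ} (hv : v ≠ 0)
    (h₁ : v * a + conj (v * b) = 0) (h₂ : v * c + conj (v * d) = 0) :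
    a * conj d = conj b * c := by
  have hvv : v * conj v ≠ 0 := mul_ne_zero hv ((map_ne_zero _).mpr hv)
  apply mul_left_cancel₀ hvv
  have : v * a * conj (v * d) = conj (v * b) * (v * c) := by
    rw [eq_neg_of_add_eq_zero_left h₁, ← neg_eq_of_add_eq_zero_left h₂]; ring
  simp only [map_mul] at this
  linear_combination this

theorem injective_addConjCLM_prod {a b c d : ℂ}
    (h : ‖a‖ = ‖b‖ → ‖c‖ = ‖d‖ → a * conj d ≠ conj b * c) :
    Function.Injective ((addConjCLM a b).prod (addConjCLM c d)) := by
  refine (injective_iff_map_eq_zero _).mpr fun v hv => ?_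
  by_contra hv0
  simp only [ContinuousLinearMap.prod_apply, addConjCLM_apply, Prod.mk_eq_zero] at hv
  exact h (norm_eq_of_mul_add_conj_mul_eq_zero hv0 hv.1)
    (norm_eq_of_mul_add_conj_mul_eq_zero hv0 hv.2)
    (mul_conj_eq_of_mul_add_conj_mul_eq_zero hv0 hv.1 hv.2)

theorem mul_add_mul_eq_zero_of_pow_mul {R : Type*} [CommRing R] [NoZeroDivisors R]
    {z s₁ s₂ s₃ s₄ : R} {n₁ n₂ n₃ n₄ : ℕ} (hsum : n₁ + n₂ = n₃ + n₄) (hz : z ≠ 0)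
    (h : z ^ n₁ * s₁ * (z ^ n₂ * s₂) + z ^ n₃ * s₃ * (z ^ n₄ * s₄) = 0) :
    s₁ * s₂ + s₃ * s₄ = 0 := by
  have hpow : z ^ (n₁ + n₂) = z ^ n₃ * z ^ n₄ := by rw [hsum, pow_add]
  have : z ^ (n₁ + n₂) * (s₁ * s₂ + s₃ * s₄) = 0 := by
    linear_combination h + s₃ * s₄ * hpow
  exact (mul_eq_zero.mp this).resolve_left (pow_ne_zero _ hz)

theorem deformed_coeffs_nondegenerate {P Q s₁ s₂ s₃ s₄ w : ℂ} {k : ℕ} (hk : k ≠ 0)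
    (hPQ : ¬(P = 0 ∧ Q = 0)) (hs₁ : s₁ ≠ 0) (hs₃ : s₃ ≠ 0)
    (hconf : w ≠ 0 → s₁ * s₂ + s₃ * s₄ = 0)
    (h₁ : ‖P * s₁‖ = ‖w ^ k * (Q * s₂)‖) (h₂ : ‖Q * s₃‖ = ‖w ^ k * (P * s₄)‖) :
    P * s₁ * conj (w ^ k * (P * s₄)) ≠ conj (w ^ k * (Q * s₂)) * (Q * s₃) := by
  intro hphase
  simp only [norm_mul, norm_pow] at h₁ h₂
  by_cases hw : w = 0
  · exact hPQ ⟨by simpa [hw, hk, hs₁] using h₁, by simpa [hw, hk, hs₃] using h₂⟩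
  by_cases hs₂ : s₂ = 0
  · have hP : P = 0 := by simpa [hs₂, hs₁] using h₁
    exact hPQ ⟨hP, by simpa [hP, hs₃] using h₂⟩
  have hsq : ((normSq (P * s₄) + normSq (Q * s₂) : ℝ) : ℂ) * (s₁ * s₂) = 0 := by
    have hwk : conj w ^ k ≠ 0 := pow_ne_zero _ ((map_ne_zero _).mpr hw)
    simp only [map_mul, map_pow] at hphase
    have := mul_left_cancel₀ hwk (by linear_combination hphase :
      conj w ^ k * (P * conj P * s₁ * conj s₄) = conj w ^ k * (Q * conj Q * conj s₂ * s₃))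
    push_cast [← mul_conj]
    simp only [map_mul]
    linear_combination s₂ * s₄ * this + Q * conj Q * s₂ * conj s₂ * hconf hw
  have hzero : normSq (P * s₄) + normSq (Q * s₂) = 0 := by
    exact_mod_cast (mul_eq_zero.mp hsq).resolve_right (mul_ne_zero hs₁ hs₂)
  have hQ : Q = 0 := (mul_eq_zero.mp (normSq_eq_zero.mp
    (by linarith [normSq_nonneg (P * s₄), normSq_nonneg (Q * s₂)]))).resolve_right hs₂
  have hP : P = 0 := by simpa [hQ, hs₁] using h₁
  exact hPQ ⟨hP, hQ⟩

theorem deformed_map_is_immersion_general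
    (n₁ n₂ n₃ n₄ : ℕ)
    (h32 : n₃ < n₂)
    (hsum : n₁ + n₂ = n₃ + n₄)
    (t₁ t₂ t₃ t₄ : ℂ → ℂ)
    (hconf : ∀ z ∈ ball (0:ℂ) 1,
      (z ^ n₁ * t₁ z) * (z ^ n₂ * t₂ z) + (z ^ n₃ * t₃ z) * (z ^ n₄ * t₄ z) = 0)
    (g₁ g₂ g₃ g₄ : (Fin (n₁ + 1) → ℂ) → (Fin (n₃ + 1) → ℂ) → ℂ → ℂ)
    (hg₁ : ∀ A B, ∀ z ∈ ball (0:ℂ) 1,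
      HasDerivAt (g₁ A B) (Ppoly n₁ A z * t₁ z) z)
    (hg₂ : ∀ A B, ∀ z ∈ ball (0:ℂ) 1,
      HasDerivAt (g₂ A B) (z ^ (n₂ - n₃) * (Ppoly n₃ B z * t₂ z)) z)
    (hg₃ : ∀ A B, ∀ z ∈ ball (0:ℂ) 1,
      HasDerivAt (g₃ A B) (Ppoly n₃ B z * t₃ z) z)
    (hg₄ : ∀ A B, ∀ z ∈ ball (0:ℂ) 1,
      HasDerivAt (g₄ A B) (z ^ (n₄ - n₁) * (Ppoly n₁ A z * t₄ z)) z)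
    (FF : (Fin (n₁ + 1) → ℂ) → (Fin (n₃ + 1) → ℂ) → ℂ → ℂ × ℂ)
    (hFF : ∀ A B z, FF A B z =
      (g₁ A B z + conj (g₂ A B z), g₃ A B z + conj (g₄ A B z)))
    (η : ℝ) (hη1 : η ≤ 1)
    (ht₁η : ∀ z : ℂ, ‖z‖ < η → t₁ z ≠ 0)
    (ht₃η : ∀ z : ℂ, ‖z‖ < η → t₃ z ≠ 0)
    (A : Fin (n₁ + 1) → ℂ) (B : Fin (n₃ + 1) → ℂ)
    (hnocommon : ∀ z : ℂ, ‖z‖ < η → ¬(Ppoly n₁ A z = 0 ∧ Ppoly n₃ B z = 0)) :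
    ∀ z : ℂ, ‖z‖ < η → Function.Injective (fderiv ℝ (FF A B) z) := by
  intro z hz
  have hz1 : z ∈ ball (0:ℂ) 1 := mem_ball_zero_iff.mpr (hz.trans_le hη1)
  have hk : n₄ - n₁ = n₂ - n₃ := by omega
  rw [hk] at hg₄
  have hF := ((hg₁ A B z hz1).hasFDerivAt_add_conj (hg₂ A B z hz1)).prodMk
    ((hg₃ A B z hz1).hasFDerivAt_add_conj (hg₄ A B z hz1))
  rw [funext (hFF A B), hF.fderiv]
  exact injective_addConjCLM_prod <| deformed_coeffs_nondegenerate (by omega) (hnocommon z hz)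
    (ht₁η z hz) (ht₃η z hz) fun hz0 => mul_add_mul_eq_zero_of_pow_mul hsum hz0 (hconf z hz1)

/-- Let `0 < η ≤ 1` with `t₁, t₃` zero-free on `{|z| < η}`. If the
polynomials `P_A` and `Q_B` have no common root in `{|z| < η}`, then the deformed map
`F(·,A,B)` is an immersion on `{|z| < η}`: its real Fréchet derivative is injective there. -/
theorem deformed_map_is_immersion
    (n₁ n₂ n₃ n₄ : ℕ)
    (h12 : n₁ < n₂) (h13 : n₁ < n₃) (h14 : n₁ < n₄) (h32 : n₃ < n₂)
    (hsum : n₁ + n₂ = n₃ + n₄)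
    (t₁ t₂ t₃ t₄ f₁ f₂ f₃ f₄ : ℂ → ℂ)
    (ht₁ : DifferentiableOn ℂ t₁ (ball (0:ℂ) 1))
    (ht₂ : DifferentiableOn ℂ t₂ (ball (0:ℂ) 1))
    (ht₃ : DifferentiableOn ℂ t₃ (ball (0:ℂ) 1))
    (ht₄ : DifferentiableOn ℂ t₄ (ball (0:ℂ) 1))
    (ht₁0 : t₁ 0 ≠ 0) (ht₂0 : t₂ 0 ≠ 0) (ht₃0 : t₃ 0 ≠ 0) (ht₄0 : t₄ 0 ≠ 0)
    (hf₁ : ∀ z ∈ ball (0:ℂ) 1, HasDerivAt f₁ (z ^ n₁ * t₁ z) z)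
    (hf₂ : ∀ z ∈ ball (0:ℂ) 1, HasDerivAt f₂ (z ^ n₂ * t₂ z) z)
    (hf₃ : ∀ z ∈ ball (0:ℂ) 1, HasDerivAt f₃ (z ^ n₃ * t₃ z) z)
    (hf₄ : ∀ z ∈ ball (0:ℂ) 1, HasDerivAt f₄ (z ^ n₄ * t₄ z) z)
    (hconf : ∀ z ∈ ball (0:ℂ) 1,
      (z ^ n₁ * t₁ z) * (z ^ n₂ * t₂ z) + (z ^ n₃ * t₃ z) * (z ^ n₄ * t₄ z) = 0)
    (g₁ g₂ g₃ g₄ : (Fin (n₁ + 1) → ℂ) → (Fin (n₃ + 1) → ℂ) → ℂ → ℂ)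
    (hg₁0 : ∀ A B, g₁ A B 0 = 0) (hg₂0 : ∀ A B, g₂ A B 0 = 0)
    (hg₃0 : ∀ A B, g₃ A B 0 = 0) (hg₄0 : ∀ A B, g₄ A B 0 = 0)
    (hg₁ : ∀ A B, ∀ z ∈ ball (0:ℂ) 1,
      HasDerivAt (g₁ A B) (Ppoly n₁ A z * t₁ z) z)
    (hg₂ : ∀ A B, ∀ z ∈ ball (0:ℂ) 1,
      HasDerivAt (g₂ A B) (z ^ (n₂ - n₃) * (Ppoly n₃ B z * t₂ z)) z)
    (hg₃ : ∀ A B, ∀ z ∈ ball (0:ℂ) 1,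
      HasDerivAt (g₃ A B) (Ppoly n₃ B z * t₃ z) z)
    (hg₄ : ∀ A B, ∀ z ∈ ball (0:ℂ) 1,
      HasDerivAt (g₄ A B) (z ^ (n₄ - n₁) * (Ppoly n₁ A z * t₄ z)) z)
    (FF : (Fin (n₁ + 1) → ℂ) → (Fin (n₃ + 1) → ℂ) → ℂ → ℂ × ℂ)
    (hFF : ∀ A B z, FF A B z =
      (g₁ A B z + conj (g₂ A B z), g₃ A B z + conj (g₄ A B z)))
    (η : ℝ) (hη0 : 0 < η) (hη1 : η ≤ 1)
    (ht₁η : ∀ z : ℂ, ‖z‖ < η → t₁ z ≠ 0)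
    (ht₃η : ∀ z : ℂ, ‖z‖ < η → t₃ z ≠ 0)
    (A : Fin (n₁ + 1) → ℂ) (B : Fin (n₃ + 1) → ℂ)
    (hnocommon : ∀ z : ℂ, ‖z‖ < η → ¬(Ppoly n₁ A z = 0 ∧ Ppoly n₃ B z = 0)) :
    ∀ z : ℂ, ‖z‖ < η → Function.Injective (fderiv ℝ (FF A B) z) :=
  deformed_map_is_immersion_general n₁ n₂ n₃ n₄ h32 hsum t₁ t₂ t₃ t₄ hconf g₁ g₂ g₃ g₄ hg₁ hg₂ hg₃
    hg₄ FF hFF η hη1 ht₁η ht₃η A B hnocommon
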